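/- For every vector b : V → ℝ and every vertex v ∈ V, the TTSV1 output at v decomposes over the edges containing v as [B b^{N−1}]_v = ∑_{e ∈ E, v ∈ e} (w(e)/|β(e)|) · ∑_{i ∈ β(e), i_1 = v} ∏_{k=2}^{N} b(i_k). -/
import Mathlib


/-- The set of ordered blowups of a finite subset `e` of the vertex set `V`:
all `N`-tuples of vertices whose set of entries is exactly `e`. -/
def blowups (V : Type*) [Fintype V] [DecidableEq V] (N : ℕ) (e : Finset V) :
    Finset (Fin N → V) :=
  Finset.univ.filter (fun i => ∀ v : V, v ∈ e ↔ ∃ k : Fin N, i k = v)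

/-- The Banerjee blowup adjacency tensor of the hypergraph with edge set `E`
and weights `w`. -/
noncomputable def tensorB (V : Type*) [Fintype V] [DecidableEq V] (N : ℕ)
    (E : Finset (Finset V)) (w : Finset V → ℝ) (i : Fin N → V) : ℝ :=
  if Finset.image i Finset.univ ∈ E then
    w (Finset.image i Finset.univ) /
      (blowups V N (Finset.image i Finset.univ)).card
  else 0

/-- The `N`-tuple `(v, j_1, …, j_{N-1})` obtained by prepending `v` to the
`(N-1)`-tuple `j`. -/
def extend (V : Type*) (N : ℕ) (v : V) (j : Fin (N - 1) → V) : Fin N → V :=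
  fun k => if h : (k : ℕ) = 0 then v else j ⟨(k : ℕ) - 1, by have := k.2; omega⟩

/-- TTSV1: `[B b^{N−1}]_v = ∑_{(i_2,…,i_N) ∈ V^{N−1}} B(v, i_2, …, i_N)
⬝ ∏_{k=2}^N b(i_k)`. -/
noncomputable def ttsv1 (V : Type*) [Fintype V] [DecidableEq V] (N : ℕ)
    (E : Finset (Finset V)) (w : Finset V → ℝ) (b : V → ℝ) (v : V) : ℝ :=
  ∑ j : Fin (N - 1) → V, tensorB V N E w (extend V N v j) * ∏ k, b (j k)

lemma mem_blowups_iff {V : Type*} [Fintype V] [DecidableEq V] {N : ℕ}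
    {e : Finset V} {i : Fin N → V} :
    i ∈ blowups V N e ↔ Finset.image i Finset.univ = e := by
  simp only [blowups, Finset.mem_filter, Finset.mem_univ, true_and]
  rw [Finset.ext_iff]
  simp only [Finset.mem_image, Finset.mem_univ, true_and]
  exact ⟨fun h x => (h x).symm, fun h x => (h x).symm⟩

/-- The TTSV1 output at `v` decomposes over the edges containing `v`:
`[B b^{N−1}]_v = ∑_{e ∈ E, v ∈ e} (w(e)/|β(e)|) ⬝ ∑_{i ∈ β(e), i_1 = v}
∏_{k=2}^N b(i_k)`. -/
theorem ttsv1_eq_sum_over_edges (V : Type*) [Fintype V] [DecidableEq V]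
    (N : ℕ) (hN : 2 ≤ N) (E : Finset (Finset V))
    (hE : ∀ e ∈ E, 2 ≤ e.card ∧ e.card ≤ N) (w : Finset V → ℝ)
    (b : V → ℝ) (v : V) :
    ttsv1 V N E w b v =
      ∑ e ∈ E.filter (fun e => v ∈ e),
        (w e / (blowups V N e).card) *
          ∑ i ∈ (blowups V N e).filter (fun i => i ⟨0, by omega⟩ = v),
            ∏ k : Fin (N - 1), b (i ⟨(k : ℕ) + 1, by have := k.2; omega⟩) := by
  classical
  have h0 : (0 : ℕ) < N := by omega
  set T : Finset (Fin N → V) :=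
    Finset.univ.filter (fun i : Fin N → V => i ⟨0, h0⟩ = v) with hT
  have hL : ttsv1 V N E w b v =
      ∑ i ∈ T, tensorB V N E w i *
        ∏ k : Fin (N - 1), b (i ⟨(k : ℕ) + 1, by have := k.2; omega⟩) := by
    rw [ttsv1]
    refine Finset.sum_nbij' (i := fun j => extend V N v j)
      (j := fun i k => i ⟨(k : ℕ) + 1, by have := k.2; omega⟩)
      ?_ ?_ ?_ ?_ ?_
    · intro j _
      simp [hT, extend]
    · intro i _; exact Finset.mem_univ _
    · intro j _
      funext k
      simp only [extend]
      rw [dif_neg (by simp)]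
      exact congrArg j (Fin.ext (by simp))
    · intro i hi
      simp only [hT, Finset.mem_filter, Finset.mem_univ, true_and] at hi
      funext k
      simp only [extend]
      by_cases h : (k : ℕ) = 0
      · rw [dif_pos h, ← hi]
        exact congrArg i (Fin.ext h.symm)
      · rw [dif_neg h]
        exact congrArg i (Fin.ext (by simp only [Fin.val_mk]; omega))
    · intro j _
      congr 1
  rw [hL]
  rw [← Finset.sum_filter_of_ne
    (p := fun i : Fin N → V => Finset.image i Finset.univ ∈ E)
    (fun i _ hne => by
      by_contra h
      simp [tensorB, h] at hne)]
  rw [← Finset.sum_fiberwise_of_maps_to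
    (g := fun i : Fin N → V => Finset.image i Finset.univ)
    (t := E.filter (fun e => v ∈ e))
    (fun i hi => by
      simp only [hT, Finset.mem_filter, Finset.mem_univ, true_and] at hi
      simp only [Finset.mem_filter]
      refine ⟨hi.2, ?_⟩
      rw [← hi.1]
      exact Finset.mem_image_of_mem _ (Finset.mem_univ _))]
  apply Finset.sum_congr rfl
  intro e he
  simp only [Finset.mem_filter] at he
  rw [Finset.mul_sum]
  apply Finset.sum_bij (i := fun i _ => i)
  · intro i hi
    simp only [hT, Finset.mem_filter, Finset.mem_univ, true_and] at hi
    simp only [Finset.mem_filter]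
    exact ⟨mem_blowups_iff.2 hi.2, hi.1.1⟩
  · intro a _ b _ h; exact h
  · intro i hi
    simp only [Finset.mem_filter] at hi
    refine ⟨i, ?_, rfl⟩
    have him := mem_blowups_iff.1 hi.1
    simp only [hT, Finset.mem_filter, Finset.mem_univ, true_and]
    exact ⟨⟨hi.2, him ▸ he.1⟩, him⟩
  · intro i hi
    simp only [hT, Finset.mem_filter, Finset.mem_univ, true_and] at hi
    rw [tensorB, hi.2, if_pos he.1]
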